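/- Let (H_L, H_R, S) be a Hopf algebroid with bijective antipode, B a right comodule algebra, and A = B^{co H_R} = B^{co H_L}. Then the right Galois map gal_R: B ⊗_A B → B ⊗_R H, a ⊗ b ↦ a b^{[0]} ⊗ b^{[1]}, is bijective if and only if the left Galois map gal_L: B ⊗_A B → B ⊗_L H, a ⊗ b ↦ a_{[0]} b ⊗ a_{[1]}, is bijective. In fact gal_L = Φ_B ∘ gal_R, where Φ_B: B ⊗_R H → B ⊗_L H, b ⊗ h ↦ ρ_L(b)·S(h), is a bijection with inverse b ⊗ h ↦ S⁻¹(h)·ρ_R(b). -/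
import Mathlib


open TensorProduct LinearMap

noncomputable section

/-- A Hopf algebroid over the commutative base ring `k` (equivalently, a coupled Hopf
algebra): a `k`-algebra `H` with a left coproduct `ΔL` (counit `εL`), a right coproduct
`ΔR` (counit `εR`) and a bijective antipode `S` coupling them. -/
structure HopfAlgebroidOver (k H : Type*) [CommRing k] [Ring H] [Algebra k H] where
  ΔL : H →ₗ[k] H ⊗[k] H
  ΔR : H →ₗ[k] H ⊗[k] H
  εL : H →ₗ[k] k
  εR : H →ₗ[k] k
  S : H →ₗ[k] H
  S_bij : Function.Bijective S
  ΔL_mul : ∀ a b : H, ΔL (a * b) = ΔL a * ΔL b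
  ΔR_mul : ∀ a b : H, ΔR (a * b) = ΔR a * ΔR b
  ΔL_one : ΔL 1 = 1
  ΔR_one : ΔR 1 = 1
  coassocL : (TensorProduct.assoc k H H H).toLinearMap ∘ₗ LinearMap.rTensor H ΔL ∘ₗ ΔL =
    LinearMap.lTensor H ΔL ∘ₗ ΔL
  coassocR : (TensorProduct.assoc k H H H).toLinearMap ∘ₗ LinearMap.rTensor H ΔR ∘ₗ ΔR =
    LinearMap.lTensor H ΔR ∘ₗ ΔR
  counitL_l : (TensorProduct.lid k H).toLinearMap ∘ₗ LinearMap.rTensor H εL ∘ₗ ΔL =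
    LinearMap.id
  counitL_r : (TensorProduct.rid k H).toLinearMap ∘ₗ LinearMap.lTensor H εL ∘ₗ ΔL =
    LinearMap.id
  counitR_l : (TensorProduct.lid k H).toLinearMap ∘ₗ LinearMap.rTensor H εR ∘ₗ ΔR =
    LinearMap.id
  counitR_r : (TensorProduct.rid k H).toLinearMap ∘ₗ LinearMap.lTensor H εR ∘ₗ ΔR =
    LinearMap.id
  /-- the two coproducts commute -/
  comul_comm₁ : (TensorProduct.assoc k H H H).toLinearMap ∘ₗ
      LinearMap.rTensor H ΔL ∘ₗ ΔR = LinearMap.lTensor H ΔR ∘ₗ ΔL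
  comul_comm₂ : (TensorProduct.assoc k H H H).toLinearMap ∘ₗ
      LinearMap.rTensor H ΔR ∘ₗ ΔL = LinearMap.lTensor H ΔL ∘ₗ ΔR
  /-- antipode axiom: `μ ∘ (S ⊗ id) ∘ ΔL = η ∘ εR` -/
  antipode_left : LinearMap.mul' k H ∘ₗ LinearMap.rTensor H S ∘ₗ ΔL =
    (Algebra.linearMap k H) ∘ₗ εR
  /-- antipode axiom: `μ ∘ (id ⊗ S) ∘ ΔR = η ∘ εL` -/
  antipode_right : LinearMap.mul' k H ∘ₗ LinearMap.lTensor H S ∘ₗ ΔR =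
    (Algebra.linearMap k H) ∘ₗ εL

variable {k H : Type*} [CommRing k] [Ring H] [Algebra k H]

/-- A right comodule over a Hopf algebroid: a `k`-module `M` with an `H_R`-coaction `ρR`
and an `H_L`-coaction `ρL` such that each coaction is a comodule map for the other. -/
structure RightComodule (A : HopfAlgebroidOver k H) (M : Type*)
    [AddCommGroup M] [Module k M] where
  ρL : M →ₗ[k] M ⊗[k] H
  ρR : M →ₗ[k] M ⊗[k] H
  coassocL : (TensorProduct.assoc k M H H).toLinearMap ∘ₗ LinearMap.rTensor H ρL ∘ₗ ρL =
    LinearMap.lTensor M A.ΔL ∘ₗ ρL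
  coassocR : (TensorProduct.assoc k M H H).toLinearMap ∘ₗ LinearMap.rTensor H ρR ∘ₗ ρR =
    LinearMap.lTensor M A.ΔR ∘ₗ ρR
  counitL : (TensorProduct.rid k M).toLinearMap ∘ₗ LinearMap.lTensor M A.εL ∘ₗ ρL =
    LinearMap.id
  counitR : (TensorProduct.rid k M).toLinearMap ∘ₗ LinearMap.lTensor M A.εR ∘ₗ ρR =
    LinearMap.id
  /-- `ρR` is an `H_L`-comodule map: `(ρ_R ⊗ id) ∘ ρ_L = (id ⊗ Δ_L) ∘ ρ_R` -/
  mixed₁ : (TensorProduct.assoc k M H H).toLinearMap ∘ₗ LinearMap.rTensor H ρR ∘ₗ ρL =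
    LinearMap.lTensor M A.ΔL ∘ₗ ρR
  /-- `ρL` is an `H_R`-comodule map: `(ρ_L ⊗ id) ∘ ρ_R = (id ⊗ Δ_R) ∘ ρ_L` -/
  mixed₂ : (TensorProduct.assoc k M H H).toLinearMap ∘ₗ LinearMap.rTensor H ρL ∘ₗ ρR =
    LinearMap.lTensor M A.ΔR ∘ₗ ρL

/-- A right comodule algebra over a Hopf algebroid: a `k`-algebra `B` which is a right
comodule whose coactions are multiplicative and unital. -/
structure RightComoduleAlgebra (A : HopfAlgebroidOver k H) (B : Type*)
    [Ring B] [Algebra k B] extends RightComodule A B where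
  ρL_mul : ∀ a b : B, ρL (a * b) = ρL a * ρL b
  ρR_mul : ∀ a b : B, ρR (a * b) = ρR a * ρR b
  ρL_one : ρL 1 = 1
  ρR_one : ρR 1 = 1

variable {B : Type*} [Ring B] [Algebra k B]

/-- The map `Φ_B : B ⊗ H → B ⊗ H`, `b ⊗ h ↦ ρ_L(b) · S(h)`, where `H` acts on `B ⊗ H`
through the second tensor factor. -/
def PhiB (ρL : B →ₗ[k] B ⊗[k] H) (S : H →ₗ[k] H) : B ⊗[k] H →ₗ[k] B ⊗[k] H :=
  LinearMap.mul' k (B ⊗[k] H) ∘ₗ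
    TensorProduct.map ρL (Algebra.TensorProduct.includeRight.toLinearMap ∘ₗ S)

/-- The map `B ⊗ H → B ⊗ H`, `b ⊗ h ↦ S⁻¹(h) · ρ_R(b)`. -/
def PsiB (ρR : B →ₗ[k] B ⊗[k] H) (Sinv : H →ₗ[k] H) : B ⊗[k] H →ₗ[k] B ⊗[k] H :=
  LinearMap.mul' k (B ⊗[k] H) ∘ₗ
    TensorProduct.map (Algebra.TensorProduct.includeRight.toLinearMap ∘ₗ Sinv) ρR ∘ₗ
    (TensorProduct.comm k B H).toLinearMap

section Stmt9Aux

variable (A : HopfAlgebroidOver k H)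

/-- `b ↦ 1 ⊗ b` -/
def aIncR : H →ₗ[k] B ⊗[k] H := Algebra.TensorProduct.includeRight.toLinearMap

/-- `b ↦ b ⊗ 1` -/
def aMk1 : B →ₗ[k] B ⊗[k] H := (TensorProduct.mk k B H).flip 1

@[simp] lemma aIncR_apply (h : H) : (aIncR : H →ₗ[k] B ⊗[k] H) h = (1:B) ⊗ₜ[k] h := rfl

@[simp] lemma aMk1_apply (b : B) : (aMk1 : B →ₗ[k] B ⊗[k] H) b = b ⊗ₜ[k] (1:H) := rfl

/-- `b ⊗ h ↦ σ(b) · (1 ⊗ h)` -/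
def aT (σ : B →ₗ[k] B ⊗[k] H) : B ⊗[k] H →ₗ[k] B ⊗[k] H :=
  LinearMap.mul' k (B ⊗[k] H) ∘ₗ TensorProduct.map σ aIncR

lemma aT_tmul (σ : B →ₗ[k] B ⊗[k] H) (b : B) (h : H) :
    aT σ (b ⊗ₜ h) = σ b * ((1:B) ⊗ₜ[k] h) := by
  simp [aT]

lemma aT_mul (σ : B →ₗ[k] B ⊗[k] H) (z : B ⊗[k] H) (h : H) :
    aT σ (z * ((1:B) ⊗ₜ[k] h)) = aT σ z * ((1:B) ⊗ₜ[k] h) := by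
  induction z using TensorProduct.induction_on with
  | zero => simp
  | tmul x g =>
      rw [Algebra.TensorProduct.tmul_mul_tmul, mul_one, aT_tmul, aT_tmul, mul_assoc,
        Algebra.TensorProduct.tmul_mul_tmul, one_mul]
  | add u v hu hv => rw [add_mul, map_add, hu, hv, map_add, add_mul]

/-- `x ⊗ y ↦ (1 ⊗ y) · σ(x)` (for the mirrored Galois maps on `H`). -/
def aU (σ : H →ₗ[k] H ⊗[k] H) : H ⊗[k] H →ₗ[k] H ⊗[k] H :=
  LinearMap.mul' k (H ⊗[k] H) ∘ₗ TensorProduct.map aIncR σ ∘ₗ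
    (TensorProduct.comm k H H).toLinearMap

lemma aU_tmul (σ : H →ₗ[k] H ⊗[k] H) (x y : H) :
    aU σ (x ⊗ₜ y) = ((1:H) ⊗ₜ[k] y) * σ x := by
  simp [aU]

lemma aU_mul (σ : H →ₗ[k] H ⊗[k] H) (z : H ⊗[k] H) (y : H) :
    aU σ (((1:H) ⊗ₜ[k] y) * z) = ((1:H) ⊗ₜ[k] y) * aU σ z := by
  induction z using TensorProduct.induction_on with
  | zero => simp
  | tmul x g =>
      rw [Algebra.TensorProduct.tmul_mul_tmul, one_mul, aU_tmul, aU_tmul, ← mul_assoc,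
        Algebra.TensorProduct.tmul_mul_tmul, mul_one]
  | add u v hu hv => rw [mul_add, map_add, hu, hv, map_add, mul_add]

end Stmt9Aux
section Stmt9Aux2

variable (A : HopfAlgebroidOver k H)

-- helper: associativity push lemmas
lemma aH1 (f : H →ₗ[k] H) :
    LinearMap.mul' k (B ⊗[k] H) ∘ₗ
      LinearMap.lTensor (B ⊗[k] H) ((aIncR : H →ₗ[k] B ⊗[k] H) ∘ₗ f) ∘ₗ
      (TensorProduct.assoc k B H H).symm.toLinearMap =
    LinearMap.lTensor B (LinearMap.mul' k H ∘ₗ LinearMap.lTensor H f) := by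
  apply TensorProduct.ext'
  intro b u
  induction u using TensorProduct.induction_on with
  | zero => simp only [tmul_zero, map_zero]
  | tmul x y => simp [Algebra.TensorProduct.tmul_mul_tmul]
  | add u v hu hv => simp only [tmul_add, map_add, hu, hv]

lemma aH3 (f : H →ₗ[k] H) :
    LinearMap.mul' k (B ⊗[k] H) ∘ₗ
      LinearMap.lTensor (B ⊗[k] H) (aIncR : H →ₗ[k] B ⊗[k] H) ∘ₗ
      LinearMap.rTensor H (LinearMap.lTensor B f) ∘ₗ
      (TensorProduct.assoc k B H H).symm.toLinearMap =
    LinearMap.lTensor B (LinearMap.mul' k H ∘ₗ LinearMap.rTensor H f) := by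
  apply TensorProduct.ext'
  intro b u
  induction u using TensorProduct.induction_on with
  | zero => simp only [tmul_zero, map_zero]
  | tmul x y => simp [Algebra.TensorProduct.tmul_mul_tmul]
  | add u v hu hv => simp only [tmul_add, map_add, hu, hv]

lemma aH2 (ε : H →ₗ[k] k) :
    LinearMap.lTensor B (Algebra.linearMap k H ∘ₗ ε) =
      (aMk1 : B →ₗ[k] B ⊗[k] H) ∘ₗ (TensorProduct.rid k B).toLinearMap ∘ₗ
        LinearMap.lTensor B ε := by
  apply TensorProduct.ext'
  intro b x
  simp [Algebra.algebraMap_eq_smul_one, tmul_smul, smul_tmul']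

lemma aH4 (f : H →ₗ[k] H) :
    LinearMap.mul' k (H ⊗[k] H) ∘ₗ
      TensorProduct.map ((aIncR : H →ₗ[k] H ⊗[k] H) ∘ₗ f) (TensorProduct.comm k H H).toLinearMap ∘ₗ
      (TensorProduct.assoc k H H H).toLinearMap =
    (TensorProduct.comm k H H).toLinearMap ∘ₗ
      LinearMap.rTensor H (LinearMap.mul' k H ∘ₗ LinearMap.rTensor H f) := by
  apply TensorProduct.ext_threefold
  intro x y z
  simp [Algebra.TensorProduct.tmul_mul_tmul]

lemma aH5 (f : H →ₗ[k] H) :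
    LinearMap.mul' k (H ⊗[k] H) ∘ₗ
      TensorProduct.map (aIncR : H →ₗ[k] H ⊗[k] H)
        ((TensorProduct.comm k H H).toLinearMap ∘ₗ LinearMap.rTensor H f) ∘ₗ
      (TensorProduct.assoc k H H H).toLinearMap =
    (TensorProduct.comm k H H).toLinearMap ∘ₗ
      LinearMap.rTensor H (LinearMap.mul' k H ∘ₗ LinearMap.lTensor H f) := by
  apply TensorProduct.ext_threefold
  intro x y z
  simp [Algebra.TensorProduct.tmul_mul_tmul]

lemma aH6 (ε : H →ₗ[k] k) :
    (TensorProduct.comm k H H).toLinearMap ∘ₗ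
      LinearMap.rTensor H (Algebra.linearMap k H ∘ₗ ε) =
    (aMk1 : H →ₗ[k] H ⊗[k] H) ∘ₗ (TensorProduct.lid k H).toLinearMap ∘ₗ
      LinearMap.rTensor H ε := by
  apply TensorProduct.ext'
  intro x y
  simp [Algebra.algebraMap_eq_smul_one, tmul_smul, smul_tmul']

lemma aHX :
    LinearMap.mul' k H ∘ₗ TensorProduct.map (Algebra.linearMap k H ∘ₗ A.εR) A.S =
      A.S ∘ₗ (TensorProduct.lid k H).toLinearMap ∘ₗ LinearMap.rTensor H A.εR := by
  apply TensorProduct.ext'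
  intro x y
  simp [Algebra.algebraMap_eq_smul_one, smul_mul_assoc]

lemma aCommComm :
    (TensorProduct.comm k H H).toLinearMap ∘ₗ (TensorProduct.comm k H H).toLinearMap =
      (LinearMap.id : H ⊗[k] H →ₗ[k] H ⊗[k] H) := by
  apply TensorProduct.ext'
  intro x y
  simp

lemma aCommMul (u v : H ⊗[k] H) :
    (TensorProduct.comm k H H) (u * v) =
      (TensorProduct.comm k H H) u * (TensorProduct.comm k H H) v := by
  induction u using TensorProduct.induction_on with
  | zero => simp
  | tmul x y =>
      induction v using TensorProduct.induction_on with
      | zero => simp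
      | tmul z w => simp [Algebra.TensorProduct.tmul_mul_tmul]
      | add p q hp hq => rw [mul_add, map_add, hp, hq, map_add, mul_add]
  | add p q hp hq => rw [add_mul, map_add, hp, hq, map_add, add_mul]

end Stmt9Aux2
section Stmt9Aux3

variable (A : HopfAlgebroidOver k H)

lemma aE2 (C : RightComoduleAlgebra A B) :
    aT C.ρL ∘ₗ LinearMap.lTensor B A.S ∘ₗ C.ρR = (aMk1 : B →ₗ[k] B ⊗[k] H) := by
  have e0 : aT C.ρL ∘ₗ LinearMap.lTensor B A.S =
      LinearMap.mul' k (B ⊗[k] H) ∘ₗ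
        LinearMap.lTensor (B ⊗[k] H) ((aIncR : H →ₗ[k] B ⊗[k] H) ∘ₗ A.S) ∘ₗ
        LinearMap.rTensor H C.ρL := by
    unfold aT
    rw [LinearMap.comp_assoc, LinearMap.map_comp_lTensor,
      ← LinearMap.lTensor_comp_rTensor]
  apply LinearMap.ext; intro b
  simp only [LinearMap.coe_comp, Function.comp_apply]
  have e0' := LinearMap.congr_fun e0 (C.ρR b)
  simp only [LinearMap.coe_comp, Function.comp_apply] at e0'
  rw [e0']
  have h2 : LinearMap.rTensor H C.ρL (C.ρR b) =
      (TensorProduct.assoc k B H H).symm (LinearMap.lTensor B A.ΔR (C.ρL b)) := by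
    have hm := LinearMap.congr_fun C.mixed₂ b
    simp only [LinearMap.coe_comp, Function.comp_apply, LinearEquiv.coe_coe] at hm
    rw [← hm, LinearEquiv.symm_apply_apply]
  rw [h2]
  have h3 := LinearMap.congr_fun (aH1 (B := B) (k := k) (H := H) A.S)
    (LinearMap.lTensor B A.ΔR (C.ρL b))
  simp only [LinearMap.coe_comp, Function.comp_apply, LinearEquiv.coe_coe] at h3
  rw [h3]
  have h4 : LinearMap.lTensor B (LinearMap.mul' k H ∘ₗ LinearMap.lTensor H A.S)
        (LinearMap.lTensor B A.ΔR (C.ρL b)) =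
      LinearMap.lTensor B (Algebra.linearMap k H ∘ₗ A.εL) (C.ρL b) := by
    rw [← LinearMap.comp_apply, ← LinearMap.lTensor_comp, LinearMap.comp_assoc,
      A.antipode_right]
  rw [h4]
  have h5 := LinearMap.congr_fun (aH2 (B := B) (k := k) (H := H) A.εL) (C.ρL b)
  simp only [LinearMap.coe_comp, Function.comp_apply, LinearEquiv.coe_coe] at h5
  rw [h5]
  have h6 := LinearMap.congr_fun C.counitL b
  simp only [LinearMap.coe_comp, Function.comp_apply, LinearEquiv.coe_coe,
    LinearMap.id_coe, id_eq] at h6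
  rw [h6]

lemma aE3 (C : RightComoduleAlgebra A B) :
    aT (LinearMap.lTensor B A.S ∘ₗ C.ρR) ∘ₗ C.ρL = (aMk1 : B →ₗ[k] B ⊗[k] H) := by
  have e0 : aT (LinearMap.lTensor B A.S ∘ₗ C.ρR) =
      LinearMap.mul' k (B ⊗[k] H) ∘ₗ
        LinearMap.lTensor (B ⊗[k] H) (aIncR : H →ₗ[k] B ⊗[k] H) ∘ₗ
        LinearMap.rTensor H (LinearMap.lTensor B A.S) ∘ₗ
        LinearMap.rTensor H C.ρR := by
    unfold aT
    rw [← LinearMap.lTensor_comp_rTensor, LinearMap.rTensor_comp]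
  apply LinearMap.ext; intro b
  simp only [LinearMap.coe_comp, Function.comp_apply]
  have e0' := LinearMap.congr_fun e0 (C.ρL b)
  simp only [LinearMap.coe_comp, Function.comp_apply] at e0'
  rw [e0']
  have h2 : LinearMap.rTensor H C.ρR (C.ρL b) =
      (TensorProduct.assoc k B H H).symm (LinearMap.lTensor B A.ΔL (C.ρR b)) := by
    have hm := LinearMap.congr_fun C.mixed₁ b
    simp only [LinearMap.coe_comp, Function.comp_apply, LinearEquiv.coe_coe] at hm
    rw [← hm, LinearEquiv.symm_apply_apply]
  rw [h2]
  have h3 := LinearMap.congr_fun (aH3 (B := B) (k := k) (H := H) A.S)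
    (LinearMap.lTensor B A.ΔL (C.ρR b))
  simp only [LinearMap.coe_comp, Function.comp_apply, LinearEquiv.coe_coe] at h3
  rw [h3]
  have h4 : LinearMap.lTensor B (LinearMap.mul' k H ∘ₗ LinearMap.rTensor H A.S)
        (LinearMap.lTensor B A.ΔL (C.ρR b)) =
      LinearMap.lTensor B (Algebra.linearMap k H ∘ₗ A.εR) (C.ρR b) := by
    rw [← LinearMap.comp_apply, ← LinearMap.lTensor_comp, LinearMap.comp_assoc,
      A.antipode_left]
  rw [h4]
  have h5 := LinearMap.congr_fun (aH2 (B := B) (k := k) (H := H) A.εR) (C.ρR b)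
  simp only [LinearMap.coe_comp, Function.comp_apply, LinearEquiv.coe_coe] at h5
  rw [h5]
  have h6 := LinearMap.congr_fun C.counitR b
  simp only [LinearMap.coe_comp, Function.comp_apply, LinearEquiv.coe_coe,
    LinearMap.id_coe, id_eq] at h6
  rw [h6]

lemma aVT (C : RightComoduleAlgebra A B) :
    aT (LinearMap.lTensor B A.S ∘ₗ C.ρR) ∘ₗ aT C.ρL =
      (LinearMap.id : B ⊗[k] H →ₗ[k] B ⊗[k] H) := by
  apply TensorProduct.ext'
  intro b h
  simp only [LinearMap.coe_comp, Function.comp_apply, LinearMap.id_coe, id_eq]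
  rw [aT_tmul, aT_mul]
  have := LinearMap.congr_fun (aE3 A C) b
  simp only [LinearMap.coe_comp, Function.comp_apply, aMk1_apply] at this
  rw [this, Algebra.TensorProduct.tmul_mul_tmul, mul_one, one_mul]

lemma aTV (C : RightComoduleAlgebra A B) :
    aT C.ρL ∘ₗ aT (LinearMap.lTensor B A.S ∘ₗ C.ρR) =
      (LinearMap.id : B ⊗[k] H →ₗ[k] B ⊗[k] H) := by
  apply TensorProduct.ext'
  intro b h
  simp only [LinearMap.coe_comp, Function.comp_apply, LinearMap.id_coe, id_eq]
  rw [aT_tmul]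
  simp only [LinearMap.coe_comp, Function.comp_apply]
  rw [aT_mul]
  have := LinearMap.congr_fun (aE2 A C) b
  simp only [LinearMap.coe_comp, Function.comp_apply, aMk1_apply] at this
  rw [this, Algebra.TensorProduct.tmul_mul_tmul, mul_one, one_mul]

/-- `H` as a right comodule algebra over itself. -/
def aHreg : RightComoduleAlgebra A H where
  ρL := A.ΔL
  ρR := A.ΔR
  coassocL := A.coassocL
  coassocR := A.coassocR
  counitL := A.counitL_r
  counitR := A.counitR_r
  mixed₁ := A.comul_comm₂
  mixed₂ := A.comul_comm₁
  ρL_mul := A.ΔL_mul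
  ρR_mul := A.ΔR_mul
  ρL_one := A.ΔL_one
  ρR_one := A.ΔR_one

end Stmt9Aux3
section Stmt9Aux4

variable (A : HopfAlgebroidOver k H)

lemma aEkappa :
    LinearMap.mul' k (H ⊗[k] H) ∘ₗ
      TensorProduct.map ((aIncR : H →ₗ[k] H ⊗[k] H) ∘ₗ A.S)
        ((TensorProduct.comm k H H).toLinearMap ∘ₗ A.ΔR) ∘ₗ A.ΔL =
      (aMk1 : H →ₗ[k] H ⊗[k] H) := by
  have e0 : TensorProduct.map ((aIncR : H →ₗ[k] H ⊗[k] H) ∘ₗ A.S)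
        ((TensorProduct.comm k H H).toLinearMap ∘ₗ A.ΔR) =
      TensorProduct.map ((aIncR : H →ₗ[k] H ⊗[k] H) ∘ₗ A.S)
        (TensorProduct.comm k H H).toLinearMap ∘ₗ LinearMap.lTensor H A.ΔR := by
    rw [LinearMap.map_comp_lTensor]
  apply LinearMap.ext; intro x
  simp only [LinearMap.coe_comp, Function.comp_apply]
  rw [e0]
  simp only [LinearMap.coe_comp, Function.comp_apply]
  have h1 : LinearMap.lTensor H A.ΔR (A.ΔL x) =
      (TensorProduct.assoc k H H H) (LinearMap.rTensor H A.ΔL (A.ΔR x)) := by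
    have hm := LinearMap.congr_fun A.comul_comm₁ x
    simp only [LinearMap.coe_comp, Function.comp_apply, LinearEquiv.coe_coe] at hm
    rw [hm]
  rw [h1]
  have h2 := LinearMap.congr_fun (aH4 A.S) (LinearMap.rTensor H A.ΔL (A.ΔR x))
  simp only [LinearMap.coe_comp, Function.comp_apply, LinearEquiv.coe_coe] at h2
  rw [h2]
  have h3 : LinearMap.rTensor H (LinearMap.mul' k H ∘ₗ LinearMap.rTensor H A.S)
        (LinearMap.rTensor H A.ΔL (A.ΔR x)) =
      LinearMap.rTensor H (Algebra.linearMap k H ∘ₗ A.εR) (A.ΔR x) := by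
    rw [← LinearMap.comp_apply, ← LinearMap.rTensor_comp, LinearMap.comp_assoc,
      A.antipode_left]
  rw [h3]
  have h4 := LinearMap.congr_fun (aH6 A.εR) (A.ΔR x)
  simp only [LinearMap.coe_comp, Function.comp_apply, LinearEquiv.coe_coe] at h4
  rw [h4]
  have h5 := LinearMap.congr_fun A.counitR_l x
  simp only [LinearMap.coe_comp, Function.comp_apply, LinearEquiv.coe_coe,
    LinearMap.id_coe, id_eq] at h5
  rw [h5]

lemma aEdelta :
    aU ((TensorProduct.comm k H H).toLinearMap ∘ₗ LinearMap.rTensor H A.S ∘ₗ A.ΔL) ∘ₗ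
      (TensorProduct.comm k H H).toLinearMap ∘ₗ A.ΔR =
      (aMk1 : H →ₗ[k] H ⊗[k] H) := by
  have e0 : aU ((TensorProduct.comm k H H).toLinearMap ∘ₗ LinearMap.rTensor H A.S ∘ₗ A.ΔL) ∘ₗ
      (TensorProduct.comm k H H).toLinearMap =
      LinearMap.mul' k (H ⊗[k] H) ∘ₗ
        TensorProduct.map (aIncR : H →ₗ[k] H ⊗[k] H)
          ((TensorProduct.comm k H H).toLinearMap ∘ₗ LinearMap.rTensor H A.S ∘ₗ A.ΔL) := by
    unfold aU
    rw [LinearMap.comp_assoc, LinearMap.comp_assoc, aCommComm, LinearMap.comp_id]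
  apply LinearMap.ext; intro x
  simp only [LinearMap.coe_comp, Function.comp_apply]
  rw [← LinearMap.comp_apply (aU _), e0]
  simp only [LinearMap.coe_comp, Function.comp_apply]
  have e1 : TensorProduct.map (aIncR : H →ₗ[k] H ⊗[k] H)
        ((TensorProduct.comm k H H).toLinearMap ∘ₗ LinearMap.rTensor H A.S ∘ₗ A.ΔL) =
      TensorProduct.map (aIncR : H →ₗ[k] H ⊗[k] H)
        ((TensorProduct.comm k H H).toLinearMap ∘ₗ LinearMap.rTensor H A.S) ∘ₗ
        LinearMap.lTensor H A.ΔL := by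
    rw [LinearMap.map_comp_lTensor, LinearMap.comp_assoc]
  rw [e1]
  simp only [LinearMap.coe_comp, Function.comp_apply]
  have h1 : LinearMap.lTensor H A.ΔL (A.ΔR x) =
      (TensorProduct.assoc k H H H) (LinearMap.rTensor H A.ΔR (A.ΔL x)) := by
    have hm := LinearMap.congr_fun A.comul_comm₂ x
    simp only [LinearMap.coe_comp, Function.comp_apply, LinearEquiv.coe_coe] at hm
    rw [hm]
  rw [h1]
  have h2 := LinearMap.congr_fun (aH5 A.S) (LinearMap.rTensor H A.ΔR (A.ΔL x))
  simp only [LinearMap.coe_comp, Function.comp_apply, LinearEquiv.coe_coe] at h2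
  rw [h2]
  have h3 : LinearMap.rTensor H (LinearMap.mul' k H ∘ₗ LinearMap.lTensor H A.S)
        (LinearMap.rTensor H A.ΔR (A.ΔL x)) =
      LinearMap.rTensor H (Algebra.linearMap k H ∘ₗ A.εL) (A.ΔL x) := by
    rw [← LinearMap.comp_apply, ← LinearMap.rTensor_comp, LinearMap.comp_assoc,
      A.antipode_right]
  rw [h3]
  have h4 := LinearMap.congr_fun (aH6 A.εL) (A.ΔL x)
  simp only [LinearMap.coe_comp, Function.comp_apply, LinearEquiv.coe_coe] at h4
  rw [h4]
  have h5 := LinearMap.congr_fun A.counitL_l x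
  simp only [LinearMap.coe_comp, Function.comp_apply, LinearEquiv.coe_coe,
    LinearMap.id_coe, id_eq] at h5
  rw [h5]

lemma aDG :
    aU ((TensorProduct.comm k H H).toLinearMap ∘ₗ LinearMap.rTensor H A.S ∘ₗ A.ΔL) ∘ₗ
      aU ((TensorProduct.comm k H H).toLinearMap ∘ₗ A.ΔR) =
      (LinearMap.id : H ⊗[k] H →ₗ[k] H ⊗[k] H) := by
  apply TensorProduct.ext'
  intro x y
  simp only [LinearMap.coe_comp, Function.comp_apply, LinearMap.id_coe, id_eq]
  rw [aU_tmul]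
  simp only [LinearMap.coe_comp, Function.comp_apply, LinearEquiv.coe_coe]
  rw [aU_mul]
  have := LinearMap.congr_fun (aEdelta A) x
  simp only [LinearMap.coe_comp, Function.comp_apply, LinearEquiv.coe_coe, aMk1_apply] at this
  rw [this, Algebra.TensorProduct.tmul_mul_tmul, mul_one, one_mul]

end Stmt9Aux4
section Stmt9Aux5

variable (A : HopfAlgebroidOver k H)

@[simp] lemma aHreg_rhoL : (aHreg A).ρL = A.ΔL := rfl
@[simp] lemma aHreg_rhoR : (aHreg A).ρR = A.ΔR := rfl

lemma aThetaEq (x : H) :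
    aT (LinearMap.lTensor H A.S ∘ₗ A.ΔR) (x ⊗ₜ[k] (1:H)) =
      LinearMap.lTensor H A.S (A.ΔR x) := by
  rw [aT_tmul]
  simp only [LinearMap.coe_comp, Function.comp_apply]
  rw [← Algebra.TensorProduct.one_def, mul_one]

lemma aBetaTheta (x : H) :
    aT A.ΔL (LinearMap.lTensor H A.S (A.ΔR x)) = x ⊗ₜ[k] (1:H) := by
  have h := LinearMap.congr_fun (aE2 A (aHreg A)) x
  simp only [LinearMap.coe_comp, Function.comp_apply, aHreg_rhoL, aHreg_rhoR,
    aMk1_apply] at h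
  exact h

lemma aStep1 (a b : H) (sa sb : Finset (H × H))
    (ha : A.ΔR a = ∑ p ∈ sa, p.1 ⊗ₜ[k] p.2)
    (hb : A.ΔR b = ∑ q ∈ sb, q.1 ⊗ₜ[k] q.2) :
    LinearMap.lTensor H A.S (A.ΔR (a * b)) =
      ∑ p ∈ sa, ∑ q ∈ sb, (p.1 * q.1) ⊗ₜ[k] (A.S q.2 * A.S p.2) := by
  have hsum : ∀ (c : H) (s : Finset (H × H)), A.ΔR c = ∑ p ∈ s, p.1 ⊗ₜ[k] p.2 →
      (∑ p ∈ s, A.ΔL p.1 * ((1:H) ⊗ₜ[k] A.S p.2)) = c ⊗ₜ[k] (1:H) := by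
    intro c s hs
    have h0 : (∑ p ∈ s, A.ΔL p.1 * ((1:H) ⊗ₜ[k] A.S p.2)) =
        aT A.ΔL (LinearMap.lTensor H A.S (A.ΔR c)) := by
      rw [hs, map_sum, map_sum]
      refine Finset.sum_congr rfl fun q _ => ?_
      rw [LinearMap.lTensor_tmul, aT_tmul]
    rw [h0, aBetaTheta]
  have key : aT A.ΔL (∑ p ∈ sa, ∑ q ∈ sb, (p.1 * q.1) ⊗ₜ[k] (A.S q.2 * A.S p.2)) =
      (a * b) ⊗ₜ[k] (1:H) := by
    rw [map_sum]
    have inner : ∀ p : H × H,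
        aT A.ΔL (∑ q ∈ sb, (p.1 * q.1) ⊗ₜ[k] (A.S q.2 * A.S p.2)) =
          A.ΔL p.1 * (b ⊗ₜ[k] (1:H)) * ((1:H) ⊗ₜ[k] A.S p.2) := by
      intro p
      rw [map_sum]
      have e1 : ∀ q : H × H, aT A.ΔL ((p.1 * q.1) ⊗ₜ[k] (A.S q.2 * A.S p.2)) =
          A.ΔL p.1 * (A.ΔL q.1 * ((1:H) ⊗ₜ[k] A.S q.2)) * ((1:H) ⊗ₜ[k] A.S p.2) := by
        intro q
        rw [aT_tmul, A.ΔL_mul]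
        have e2 : ((1:H) ⊗ₜ[k] (A.S q.2 * A.S p.2)) =
            ((1:H) ⊗ₜ[k] A.S q.2) * ((1:H) ⊗ₜ[k] A.S p.2) := by
          rw [Algebra.TensorProduct.tmul_mul_tmul, one_mul]
        rw [e2]
        simp only [mul_assoc]
      rw [Finset.sum_congr rfl fun q _ => e1 q, ← Finset.sum_mul, ← Finset.mul_sum,
        hsum b sb hb]
    rw [Finset.sum_congr rfl fun p _ => inner p]
    have hcomm : ∀ p : H × H,
        A.ΔL p.1 * (b ⊗ₜ[k] (1:H)) * ((1:H) ⊗ₜ[k] A.S p.2) =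
          A.ΔL p.1 * ((1:H) ⊗ₜ[k] A.S p.2) * (b ⊗ₜ[k] (1:H)) := by
      intro p
      have e3 : (b ⊗ₜ[k] (1:H)) * ((1:H) ⊗ₜ[k] A.S p.2) =
          ((1:H) ⊗ₜ[k] A.S p.2) * (b ⊗ₜ[k] (1:H)) := by
        rw [Algebra.TensorProduct.tmul_mul_tmul, Algebra.TensorProduct.tmul_mul_tmul,
          mul_one, one_mul, mul_one, one_mul]
      rw [mul_assoc, e3, ← mul_assoc]
    rw [Finset.sum_congr rfl fun p _ => hcomm p, ← Finset.sum_mul, hsum a sa ha,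
      Algebra.TensorProduct.tmul_mul_tmul, mul_one]
  have h1 := LinearMap.congr_fun (aVT A (aHreg A))
    (∑ p ∈ sa, ∑ q ∈ sb, (p.1 * q.1) ⊗ₜ[k] (A.S q.2 * A.S p.2))
  simp only [LinearMap.coe_comp, Function.comp_apply, aHreg_rhoL, aHreg_rhoR,
    LinearMap.id_coe, id_eq] at h1
  rw [key] at h1
  rw [← h1, aThetaEq]

lemma aKappa (c : H) (s : Finset (H × H))
    (hs : A.ΔL c = ∑ p ∈ s, p.1 ⊗ₜ[k] p.2) :
    (∑ p ∈ s, ((1:H) ⊗ₜ[k] A.S p.1) * (TensorProduct.comm k H H) (A.ΔR p.2)) =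
      c ⊗ₜ[k] (1:H) := by
  have h0 : (∑ p ∈ s, ((1:H) ⊗ₜ[k] A.S p.1) * (TensorProduct.comm k H H) (A.ΔR p.2)) =
      (LinearMap.mul' k (H ⊗[k] H) ∘ₗ
        TensorProduct.map ((aIncR : H →ₗ[k] H ⊗[k] H) ∘ₗ A.S)
          ((TensorProduct.comm k H H).toLinearMap ∘ₗ A.ΔR) ∘ₗ A.ΔL) c := by
    simp only [LinearMap.coe_comp, Function.comp_apply]
    rw [hs, map_sum, map_sum]
    refine Finset.sum_congr rfl fun p _ => ?_
    simp only [TensorProduct.map_tmul, LinearMap.coe_comp, Function.comp_apply,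
      LinearEquiv.coe_coe, aIncR_apply, LinearMap.mul'_apply]
  rw [h0, aEkappa, aMk1_apply]

lemma aStep1' (a b : H) (sa sb : Finset (H × H))
    (ha : A.ΔL a = ∑ p ∈ sa, p.1 ⊗ₜ[k] p.2)
    (hb : A.ΔL b = ∑ q ∈ sb, q.1 ⊗ₜ[k] q.2) :
    (TensorProduct.comm k H H) (LinearMap.rTensor H A.S (A.ΔL (a * b))) =
      ∑ p ∈ sa, ∑ q ∈ sb, (p.2 * q.2) ⊗ₜ[k] (A.S q.1 * A.S p.1) := by
  set γσ : H →ₗ[k] H ⊗[k] H := (TensorProduct.comm k H H).toLinearMap ∘ₗ A.ΔR with hγσ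
  set δσ : H →ₗ[k] H ⊗[k] H :=
    (TensorProduct.comm k H H).toLinearMap ∘ₗ LinearMap.rTensor H A.S ∘ₗ A.ΔL with hδσ
  have key : aU γσ (∑ p ∈ sa, ∑ q ∈ sb, (p.2 * q.2) ⊗ₜ[k] (A.S q.1 * A.S p.1)) =
      (a * b) ⊗ₜ[k] (1:H) := by
    rw [map_sum]
    have e1 : ∀ p q : H × H, aU γσ ((p.2 * q.2) ⊗ₜ[k] (A.S q.1 * A.S p.1)) =
        ((1:H) ⊗ₜ[k] A.S q.1 *
          (((1:H) ⊗ₜ[k] A.S p.1) * (TensorProduct.comm k H H) (A.ΔR p.2))) *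
          (TensorProduct.comm k H H) (A.ΔR q.2) := by
      intro p q
      rw [aU_tmul]
      simp only [hγσ, LinearMap.coe_comp, Function.comp_apply, LinearEquiv.coe_coe]
      rw [A.ΔR_mul, aCommMul]
      have e2 : ((1:H) ⊗ₜ[k] (A.S q.1 * A.S p.1)) =
          ((1:H) ⊗ₜ[k] A.S q.1) * ((1:H) ⊗ₜ[k] A.S p.1) := by
        rw [Algebra.TensorProduct.tmul_mul_tmul, one_mul]
      rw [e2]
      simp only [mul_assoc]
    have swap : (∑ p ∈ sa, ∑ q ∈ sb, aU γσ ((p.2 * q.2) ⊗ₜ[k] (A.S q.1 * A.S p.1))) =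
        ∑ q ∈ sb, ∑ p ∈ sa, aU γσ ((p.2 * q.2) ⊗ₜ[k] (A.S q.1 * A.S p.1)) :=
      Finset.sum_comm
    calc (∑ p ∈ sa, aU γσ (∑ q ∈ sb, (p.2 * q.2) ⊗ₜ[k] (A.S q.1 * A.S p.1)))
        = ∑ p ∈ sa, ∑ q ∈ sb, aU γσ ((p.2 * q.2) ⊗ₜ[k] (A.S q.1 * A.S p.1)) := by
          refine Finset.sum_congr rfl fun p _ => ?_
          rw [map_sum]
      _ = ∑ q ∈ sb, ∑ p ∈ sa, aU γσ ((p.2 * q.2) ⊗ₜ[k] (A.S q.1 * A.S p.1)) := swap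
      _ = ∑ q ∈ sb, (((1:H) ⊗ₜ[k] A.S q.1) * (a ⊗ₜ[k] (1:H))) *
            (TensorProduct.comm k H H) (A.ΔR q.2) := by
          refine Finset.sum_congr rfl fun q _ => ?_
          rw [Finset.sum_congr rfl fun p _ => e1 p q, ← Finset.sum_mul, ← Finset.mul_sum,
            aKappa A a sa ha]
      _ = ∑ q ∈ sb, (a ⊗ₜ[k] (1:H)) *
            (((1:H) ⊗ₜ[k] A.S q.1) * (TensorProduct.comm k H H) (A.ΔR q.2)) := by
          refine Finset.sum_congr rfl fun q _ => ?_
          have e3 : ((1:H) ⊗ₜ[k] A.S q.1) * (a ⊗ₜ[k] (1:H)) =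
              (a ⊗ₜ[k] (1:H)) * ((1:H) ⊗ₜ[k] A.S q.1) := by
            rw [Algebra.TensorProduct.tmul_mul_tmul, Algebra.TensorProduct.tmul_mul_tmul,
              mul_one, one_mul, mul_one, one_mul]
          rw [e3, mul_assoc]
      _ = (a ⊗ₜ[k] (1:H)) * (b ⊗ₜ[k] (1:H)) := by
          rw [← Finset.mul_sum, aKappa A b sb hb]
      _ = (a * b) ⊗ₜ[k] (1:H) := by
          rw [Algebra.TensorProduct.tmul_mul_tmul, mul_one]
  have h1 := LinearMap.congr_fun (aDG A)
    (∑ p ∈ sa, ∑ q ∈ sb, (p.2 * q.2) ⊗ₜ[k] (A.S q.1 * A.S p.1))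
  simp only [LinearMap.coe_comp, Function.comp_apply, LinearMap.id_coe, id_eq] at h1
  rw [key] at h1
  rw [← h1, aU_tmul]
  simp only [LinearMap.coe_comp, Function.comp_apply, LinearEquiv.coe_coe]
  rw [← Algebra.TensorProduct.one_def, one_mul]

lemma aMuS (x : H) :
    LinearMap.mul' k H (LinearMap.rTensor H A.S (A.ΔL x)) =
      Algebra.linearMap k H (A.εR x) := by
  have h := LinearMap.congr_fun A.antipode_left x
  simp only [LinearMap.coe_comp, Function.comp_apply] at h
  exact h

lemma aMuS' (c : H) (s : Finset (H × H))
    (hs : A.ΔL c = ∑ p ∈ s, p.1 ⊗ₜ[k] p.2) :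
    (∑ p ∈ s, A.S p.1 * p.2) = Algebra.linearMap k H (A.εR c) := by
  rw [← aMuS A c, hs, map_sum, map_sum]
  refine Finset.sum_congr rfl fun p _ => ?_
  simp

lemma aEps (a b : H) :
    Algebra.linearMap k H (A.εR (a * b)) =
      A.εR a • Algebra.linearMap k H (A.εR b) := by
  obtain ⟨sa, ha⟩ := TensorProduct.exists_finset (A.ΔL a)
  obtain ⟨sb, hb⟩ := TensorProduct.exists_finset (A.ΔL b)
  have st := aStep1' A a b sa sb ha hb
  have happ := congrArg (fun z => LinearMap.mul' k H ((TensorProduct.comm k H H) z)) st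
  have hcc : (TensorProduct.comm k H H)
      ((TensorProduct.comm k H H) (LinearMap.rTensor H A.S (A.ΔL (a * b)))) =
      LinearMap.rTensor H A.S (A.ΔL (a * b)) := by
    have := LinearMap.congr_fun (aCommComm (k := k) (H := H))
      (LinearMap.rTensor H A.S (A.ΔL (a * b)))
    simp only [LinearMap.coe_comp, Function.comp_apply, LinearEquiv.coe_coe,
      LinearMap.id_coe, id_eq] at this
    exact this
  rw [hcc, aMuS A] at happ
  rw [happ, map_sum, map_sum]
  have hdist : ∀ p : H × H, LinearMap.mul' k H ((TensorProduct.comm k H H)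
        (∑ q ∈ sb, (p.2 * q.2) ⊗ₜ[k] (A.S q.1 * A.S p.1))) =
      ∑ q ∈ sb, LinearMap.mul' k H
        ((TensorProduct.comm k H H) ((p.2 * q.2) ⊗ₜ[k] (A.S q.1 * A.S p.1))) := by
    intro p
    rw [map_sum, map_sum]
  rw [Finset.sum_congr rfl fun p _ => hdist p, Finset.sum_comm]
  have e1 : ∀ q : H × H, (∑ p ∈ sa, LinearMap.mul' k H
        ((TensorProduct.comm k H H) ((p.2 * q.2) ⊗ₜ[k] (A.S q.1 * A.S p.1)))) =
      A.εR a • (A.S q.1 * q.2) := by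
    intro q
    have e2 : ∀ p : H × H, LinearMap.mul' k H
        ((TensorProduct.comm k H H) ((p.2 * q.2) ⊗ₜ[k] (A.S q.1 * A.S p.1))) =
        (A.S q.1 * (A.S p.1 * p.2)) * q.2 := by
      intro p
      rw [TensorProduct.comm_tmul, LinearMap.mul'_apply]
      simp only [mul_assoc]
    rw [Finset.sum_congr rfl fun p _ => e2 p, ← Finset.sum_mul, ← Finset.mul_sum,
      aMuS' A a sa ha, Algebra.linearMap_apply, Algebra.algebraMap_eq_smul_one,
      mul_smul_comm, mul_one, smul_mul_assoc]
  rw [Finset.sum_congr rfl fun q _ => e1 q, ← Finset.smul_sum, aMuS' A b sb hb]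

lemma aX1 (c : H) (s : Finset (H × H))
    (hs : A.ΔR c = ∑ p ∈ s, p.1 ⊗ₜ[k] p.2) :
    (∑ p ∈ s, Algebra.linearMap k H (A.εR p.1) * A.S p.2) = A.S c := by
  have h0 : (∑ p ∈ s, Algebra.linearMap k H (A.εR p.1) * A.S p.2) =
      LinearMap.mul' k H
        (TensorProduct.map (Algebra.linearMap k H ∘ₗ A.εR) A.S (A.ΔR c)) := by
    rw [hs, map_sum, map_sum]
    refine Finset.sum_congr rfl fun p _ => ?_
    simp
  rw [h0]
  have h1 := LinearMap.congr_fun (aHX A) (A.ΔR c)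
  simp only [LinearMap.coe_comp, Function.comp_apply, LinearEquiv.coe_coe] at h1
  rw [h1]
  have h2 := LinearMap.congr_fun A.counitR_l c
  simp only [LinearMap.coe_comp, Function.comp_apply, LinearEquiv.coe_coe,
    LinearMap.id_coe, id_eq] at h2
  rw [h2]

lemma aSmul (a b : H) : A.S (a * b) = A.S b * A.S a := by
  obtain ⟨sa, ha⟩ := TensorProduct.exists_finset (A.ΔR a)
  obtain ⟨sb, hb⟩ := TensorProduct.exists_finset (A.ΔR b)
  have st := aStep1 A a b sa sb ha hb
  have happ := congrArg (fun z => LinearMap.mul' k H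
    (LinearMap.rTensor H (Algebra.linearMap k H ∘ₗ A.εR) z)) st
  have hL : LinearMap.mul' k H (LinearMap.rTensor H (Algebra.linearMap k H ∘ₗ A.εR)
      (LinearMap.lTensor H A.S (A.ΔR (a * b)))) = A.S (a * b) := by
    have e := LinearMap.congr_fun
      (LinearMap.rTensor_comp_lTensor (f := Algebra.linearMap k H ∘ₗ A.εR) (g := A.S))
      (A.ΔR (a * b))
    simp only [LinearMap.coe_comp, Function.comp_apply] at e
    rw [e]
    have h1 := LinearMap.congr_fun (aHX A) (A.ΔR (a * b))
    simp only [LinearMap.coe_comp, Function.comp_apply, LinearEquiv.coe_coe] at h1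
    rw [h1]
    have h2 := LinearMap.congr_fun A.counitR_l (a * b)
    simp only [LinearMap.coe_comp, Function.comp_apply, LinearEquiv.coe_coe,
      LinearMap.id_coe, id_eq] at h2
    rw [h2]
  rw [hL] at happ
  rw [happ, map_sum, map_sum]
  have hdist : ∀ p : H × H, LinearMap.mul' k H
        (LinearMap.rTensor H (Algebra.linearMap k H ∘ₗ A.εR)
          (∑ q ∈ sb, (p.1 * q.1) ⊗ₜ[k] (A.S q.2 * A.S p.2))) =
      ∑ q ∈ sb, LinearMap.mul' k H
        (LinearMap.rTensor H (Algebra.linearMap k H ∘ₗ A.εR)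
          ((p.1 * q.1) ⊗ₜ[k] (A.S q.2 * A.S p.2))) := by
    intro p
    rw [map_sum, map_sum]
  rw [Finset.sum_congr rfl fun p _ => hdist p]
  have e1 : ∀ p : H × H, (∑ q ∈ sb, LinearMap.mul' k H
        (LinearMap.rTensor H (Algebra.linearMap k H ∘ₗ A.εR)
          ((p.1 * q.1) ⊗ₜ[k] (A.S q.2 * A.S p.2)))) =
      A.S b * (A.εR p.1 • A.S p.2) := by
    intro p
    have e2 : ∀ q : H × H, LinearMap.mul' k H
        (LinearMap.rTensor H (Algebra.linearMap k H ∘ₗ A.εR)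
          ((p.1 * q.1) ⊗ₜ[k] (A.S q.2 * A.S p.2))) =
        A.εR p.1 • ((Algebra.linearMap k H (A.εR q.1) * A.S q.2) * A.S p.2) := by
      intro q
      rw [LinearMap.rTensor_tmul, LinearMap.mul'_apply]
      simp only [LinearMap.coe_comp, Function.comp_apply]
      rw [aEps A, smul_mul_assoc, mul_assoc]
    rw [Finset.sum_congr rfl fun q _ => e2 q, ← Finset.smul_sum, ← Finset.sum_mul,
      aX1 A b sb hb, mul_smul_comm]
  rw [Finset.sum_congr rfl fun p _ => e1 p, ← Finset.mul_sum]
  congr 1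
  have e3 : ∀ p : H × H, A.εR p.1 • A.S p.2 =
      Algebra.linearMap k H (A.εR p.1) * A.S p.2 := by
    intro p
    rw [Algebra.linearMap_apply, ← Algebra.smul_def]
  rw [Finset.sum_congr rfl fun p _ => e3 p, aX1 A a sa ha]

end Stmt9Aux5
section Stmt9Aux6

variable (A : HopfAlgebroidOver k H)

lemma aPhiB_tmul (ρL : B →ₗ[k] B ⊗[k] H) (c : B) (d : H) :
    PhiB ρL A.S (c ⊗ₜ[k] d) = ρL c * ((1:B) ⊗ₜ[k] A.S d) := by
  simp [PhiB]

lemma aPhiB_eq (C : RightComoduleAlgebra A B) :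
    PhiB C.ρL A.S = aT C.ρL ∘ₗ LinearMap.lTensor B A.S := by
  unfold PhiB aT aIncR
  rw [LinearMap.comp_assoc, LinearMap.map_comp_lTensor]

lemma aPsiB_tmul (ρR : B →ₗ[k] B ⊗[k] H) (Sinv : H →ₗ[k] H) (c : B) (d : H) :
    PsiB ρR Sinv (c ⊗ₜ[k] d) = ((1:B) ⊗ₜ[k] Sinv d) * ρR c := by
  simp [PsiB]

lemma aPsiV (C : RightComoduleAlgebra A B) (Sinv : H →ₗ[k] H)
    (hS₂ : A.S ∘ₗ Sinv = LinearMap.id) :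
    LinearMap.lTensor B A.S ∘ₗ PsiB C.ρR Sinv =
      aT (LinearMap.lTensor B A.S ∘ₗ C.ρR) := by
  apply TensorProduct.ext'
  intro b h
  simp only [LinearMap.coe_comp, Function.comp_apply]
  rw [aPsiB_tmul, aT_tmul]
  simp only [LinearMap.coe_comp, Function.comp_apply]
  have hSSinv : A.S (Sinv h) = h := by
    have := LinearMap.congr_fun hS₂ h
    simpa using this
  have key : ∀ u : B ⊗[k] H, LinearMap.lTensor B A.S (((1:B) ⊗ₜ[k] Sinv h) * u) =
      LinearMap.lTensor B A.S u * ((1:B) ⊗ₜ[k] h) := by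
    intro u
    induction u using TensorProduct.induction_on with
    | zero => simp
    | tmul x g =>
        rw [Algebra.TensorProduct.tmul_mul_tmul, one_mul, LinearMap.lTensor_tmul,
          LinearMap.lTensor_tmul, aSmul, hSSinv, Algebra.TensorProduct.tmul_mul_tmul,
          mul_one]
    | add u v hu hv => rw [mul_add, map_add, hu, hv, map_add, add_mul]
  rw [key]

end Stmt9Aux6
/-- For a Hopf algebroid `(H_L, H_R, S)` with bijective antipode and a right comodule
algebra `B` with coinvariants `A' = B^{co H_R} = B^{co H_L}`, the right Galois map
`gal_R : B ⊗_{A'} B → B ⊗ H`, `a ⊗ b ↦ a b⁰ ⊗ b¹`, is bijective if and only if the left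
Galois map `gal_L : B ⊗_{A'} B → B ⊗ H`, `a ⊗ b ↦ a₀ b ⊗ a₁`, is bijective.  In fact
`gal_L = Φ_B ∘ gal_R` where `Φ_B (b ⊗ h) = ρ_L(b) · S(h)` is a bijection with inverse
`b ⊗ h ↦ S⁻¹(h) · ρ_R(b)`.  (Here `Q`, together with the surjection `π`, plays the role
of the balanced tensor product `B ⊗_{A'} B`.) -/
theorem stmt9 (A : HopfAlgebroidOver k H) (C : RightComoduleAlgebra A B)
    (Sinv : H →ₗ[k] H) (hS₁ : Sinv ∘ₗ A.S = LinearMap.id)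
    (hS₂ : A.S ∘ₗ Sinv = LinearMap.id)
    -- the common coinvariants
    (A' : Set B) (hA' : A' = {b : B | C.ρR b = b ⊗ₜ (1 : H)})
    -- Q realizes the balanced tensor product B ⊗_{A'} B
    (Q : Type*) [AddCommGroup Q] [Module k Q] (π : B ⊗[k] B →ₗ[k] Q)
    (hπ : Function.Surjective π)
    (hbal : ∀ (a : A') (x y : B), π ((x * (a : B)) ⊗ₜ y) = π (x ⊗ₜ ((a : B) * y)))
    (galR galL : Q →ₗ[k] B ⊗[k] H)
    (hgalR : ∀ a b : B, galR (π (a ⊗ₜ b)) = (a ⊗ₜ (1 : H)) * C.ρR b)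
    (hgalL : ∀ a b : B, galL (π (a ⊗ₜ b)) = C.ρL a * (b ⊗ₜ (1 : H))) :
    (Function.Bijective galR ↔ Function.Bijective galL) ∧
    galL = PhiB C.ρL A.S ∘ₗ galR ∧
    Function.Bijective (PhiB C.ρL A.S) ∧
    PsiB C.ρR Sinv ∘ₗ PhiB C.ρL A.S = LinearMap.id ∧
    PhiB C.ρL A.S ∘ₗ PsiB C.ρR Sinv = LinearMap.id := by
  have hPsi : PsiB C.ρR Sinv =
      LinearMap.lTensor B Sinv ∘ₗ aT (LinearMap.lTensor B A.S ∘ₗ C.ρR) := by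
    rw [← aPsiV A C Sinv hS₂, ← LinearMap.comp_assoc, ← LinearMap.lTensor_comp, hS₁,
      LinearMap.lTensor_id, LinearMap.id_comp]
  have hPsiPhi : PsiB C.ρR Sinv ∘ₗ PhiB C.ρL A.S = LinearMap.id := by
    rw [hPsi, aPhiB_eq A C, LinearMap.comp_assoc]
    have h1 : aT (LinearMap.lTensor B A.S ∘ₗ C.ρR) ∘ₗ
        (aT C.ρL ∘ₗ LinearMap.lTensor B A.S) = LinearMap.lTensor B A.S := by
      rw [← LinearMap.comp_assoc, aVT A C, LinearMap.id_comp]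
    rw [h1, ← LinearMap.lTensor_comp, hS₁, LinearMap.lTensor_id]
  have hPhiPsi : PhiB C.ρL A.S ∘ₗ PsiB C.ρR Sinv = LinearMap.id := by
    rw [hPsi, aPhiB_eq A C, LinearMap.comp_assoc]
    have h1 : LinearMap.lTensor B A.S ∘ₗ (LinearMap.lTensor B Sinv ∘ₗ
        aT (LinearMap.lTensor B A.S ∘ₗ C.ρR)) =
        aT (LinearMap.lTensor B A.S ∘ₗ C.ρR) := by
      rw [← LinearMap.comp_assoc, ← LinearMap.lTensor_comp, hS₂, LinearMap.lTensor_id,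
        LinearMap.id_comp]
    rw [h1, aTV A C]
  have hbijPhi : Function.Bijective (PhiB C.ρL A.S) := by
    refine Function.bijective_iff_has_inverse.mpr ⟨PsiB C.ρR Sinv, fun x => ?_, fun x => ?_⟩
    · have := LinearMap.congr_fun hPsiPhi x
      simpa using this
    · have := LinearMap.congr_fun hPhiPsi x
      simpa using this
  have hbijPsi : Function.Bijective (PsiB C.ρR Sinv) := by
    refine Function.bijective_iff_has_inverse.mpr ⟨PhiB C.ρL A.S, fun x => ?_, fun x => ?_⟩
    · have := LinearMap.congr_fun hPhiPsi x
      simpa using this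
    · have := LinearMap.congr_fun hPsiPhi x
      simpa using this
  have hfact : galL = PhiB C.ρL A.S ∘ₗ galR := by
    apply LinearMap.ext
    intro z
    obtain ⟨w, rfl⟩ := hπ z
    simp only [LinearMap.coe_comp, Function.comp_apply]
    induction w using TensorProduct.induction_on with
    | zero => simp
    | tmul x y =>
        rw [hgalL, hgalR]
        have hmul : ∀ u : B ⊗[k] H,
            PhiB C.ρL A.S ((x ⊗ₜ[k] (1:H)) * u) = C.ρL x * PhiB C.ρL A.S u := by
          intro u
          induction u using TensorProduct.induction_on with
          | zero => simp
          | tmul c d =>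
              rw [Algebra.TensorProduct.tmul_mul_tmul, one_mul, aPhiB_tmul, aPhiB_tmul,
                C.ρL_mul, mul_assoc]
          | add u v hu hv => rw [mul_add, map_add, hu, hv, map_add, mul_add]
        rw [hmul]
        have hco : PhiB C.ρL A.S (C.ρR y) = y ⊗ₜ[k] (1:H) := by
          have h0 := LinearMap.congr_fun (aE2 A C) y
          simp only [LinearMap.coe_comp, Function.comp_apply, aMk1_apply] at h0
          have h1 := LinearMap.congr_fun (aPhiB_eq A C) (C.ρR y)
          simp only [LinearMap.coe_comp, Function.comp_apply] at h1
          rw [h1, h0]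
        rw [hco]
    | add u v hu hv => rw [map_add, map_add, map_add, hu, hv, map_add]
  refine ⟨?_, hfact, hbijPhi, hPsiPhi, hPhiPsi⟩
  constructor
  · intro h
    rw [hfact, LinearMap.coe_comp]
    exact hbijPhi.comp h
  · intro h
    have hR : galR = PsiB C.ρR Sinv ∘ₗ galL := by
      rw [hfact, ← LinearMap.comp_assoc, hPsiPhi, LinearMap.id_comp]
    rw [hR, LinearMap.coe_comp]
    exact hbijPsi.comp h

end
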